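/- arXiv:1702.06269 — 6 statements merged into one kernel-verified Lean document; each statement's English description precedes it below -/
import Mathlib

section
/- Let E be a real inner product space, Ω ⊆ E a nonempty convex set, and g : E → ℝ a λ-strongly convex function on Ω with λ ≥ 0. Fix w_prev ∈ E and γ > 0, and let w₊ ∈ Ω be a minimizer over Ω of the map w ↦ g(w) + (γ/2)‖w − w_prev‖². Then for every w ∈ Ω one has ((λ + γ)/γ)‖w₊ − w‖² ≤ ‖w_prev − w‖² − ‖w_prev − w₊‖² − (2/γ)(g(w₊) − g(w)). -/
open scoped RealInnerProductSpace

/-!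
The proximal objective `g + (γ/2)‖· - w_prev‖²` is `(λ + γ)`-strongly convex on `Ω`, and a
`μ`-strongly convex function grows at least like `(μ/2)‖w - w₊‖²` away from a minimizer `w₊`:
compare `f w₊ ≤ f (t w + (1 - t) w₊)` with the strong convexity inequality, divide by `t` and let
`t → 0⁺`. Expanding the quadratic term and dividing by `γ/2` gives the claim.
-/

section InnerProductSpace

variable {E : Type*} [NormedAddCommGroup E] [InnerProductSpace ℝ E]

lemma norm_smul_add_smul_sq_of_add_eq_one (x y : E) {a b : ℝ} (ha : 0 ≤ a) (hb : 0 ≤ b)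
    (hab : a + b = 1) :
    ‖a • x + b • y‖ ^ 2 = a * ‖x‖ ^ 2 + b * ‖y‖ ^ 2 - a * b * ‖x - y‖ ^ 2 := by
  rw [norm_add_sq_real, norm_sub_sq_real, norm_smul, norm_smul, real_inner_smul_left,
    inner_smul_right, Real.norm_of_nonneg ha, Real.norm_of_nonneg hb, mul_pow, mul_pow]
  obtain rfl := eq_sub_of_add_eq hab
  ring

lemma strongConvexOn_sq_norm_sub {s : Set E} (hs : Convex ℝ s) (c : E) (γ : ℝ) :
    StrongConvexOn s γ fun w ↦ γ / 2 * ‖w - c‖ ^ 2 := by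
  refine ⟨hs, fun x _ y _ a b ha hb hab ↦ le_of_eq ?_⟩
  dsimp only
  have hshift : a • x + b • y - c = a • (x - c) + b • (y - c) := by
    rw [smul_sub, smul_sub, sub_add_sub_comm, ← add_smul, hab, one_smul]
  rw [hshift, norm_smul_add_smul_sq_of_add_eq_one _ _ ha hb hab, sub_sub_sub_cancel_right,
    smul_eq_mul, smul_eq_mul]
  ring

end InnerProductSpace

section NormedSpace

variable {E : Type*} [NormedAddCommGroup E] [NormedSpace ℝ E] {s : Set E} {m n : ℝ}
  {f g : E → ℝ}

lemma StrongConvexOn.add (hf : StrongConvexOn s m f) (hg : StrongConvexOn s n g) :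
    StrongConvexOn s (m + n) (f + g) :=
  (UniformConvexOn.add hf hg).mono fun r ↦ le_of_eq <| by simp only [Pi.add_apply]; ring

lemma StrongConvexOn.add_sq_norm_sub_le_of_isMinOn (hf : StrongConvexOn s m f) {x y : E}
    (hx : x ∈ s) (hy : y ∈ s) (hmin : IsMinOn f s x) :
    f x + m / 2 * ‖y - x‖ ^ 2 ≤ f y := by
  have hsegment : ∀ t ∈ Set.Ioo (0 : ℝ) 1, f x + (1 - t) * (m / 2 * ‖y - x‖ ^ 2) ≤ f y := by
    rintro t ⟨ht₀, ht₁⟩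
    have hab : t + (1 - t) = 1 := by ring
    have hstrong := hf.2 hy hx ht₀.le (sub_nonneg.2 ht₁.le) hab
    have hle : f x ≤ f (t • y + (1 - t) • x) :=
      hmin (hf.1 hy hx ht₀.le (sub_nonneg.2 ht₁.le) hab)
    simp only [smul_eq_mul] at hstrong
    have : t * (f x + (1 - t) * (m / 2 * ‖y - x‖ ^ 2)) ≤ t * f y := by linarith
    exact le_of_mul_le_mul_left this ht₀
  have hlim : Filter.Tendsto (fun t : ℝ ↦ f x + (1 - t) * (m / 2 * ‖y - x‖ ^ 2))
      (nhdsWithin 0 (Set.Ioi 0)) (nhds (f x + m / 2 * ‖y - x‖ ^ 2)) :=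
    tendsto_nhdsWithin_of_tendsto_nhds <| Continuous.tendsto' (by fun_prop) 0 _ (by simp)
  refine le_of_tendsto hlim ?_
  filter_upwards [Ioo_mem_nhdsGT (zero_lt_one' ℝ)] with t ht using hsegment t ht

end NormedSpace

theorem stmt_1_general {E : Type*} [NormedAddCommGroup E] [InnerProductSpace ℝ E]
    {Ω : Set E} (hconv : Convex ℝ Ω)
    {lam : ℝ} {g : E → ℝ} (hg : StrongConvexOn Ω lam g)
    (wprev : E) {γ : ℝ} (hγ : 0 < γ)
    {wplus : E} (hmem : wplus ∈ Ω)
    (hmin : IsMinOn (fun w => g w + γ / 2 * ‖w - wprev‖ ^ 2) Ω wplus) :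
    ∀ w ∈ Ω,
      (lam + γ) / γ * ‖wplus - w‖ ^ 2 ≤
        ‖wprev - w‖ ^ 2 - ‖wprev - wplus‖ ^ 2 - 2 / γ * (g wplus - g w) := by
  intro w hw
  have hgrowth := (hg.add (strongConvexOn_sq_norm_sub hconv wprev γ)).add_sq_norm_sub_le_of_isMinOn
      hmem hw hmin
  simp only [Pi.add_apply] at hgrowth
  rw [norm_sub_rev wprev, norm_sub_rev wprev, norm_sub_rev wplus, div_mul_eq_mul_div,
    div_le_iff₀ hγ]
  field_simp
  linarith

/-- For a `λ`-strongly convex function `g` on a nonempty convex set `Ω`,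
if `w₊ ∈ Ω` minimizes `w ↦ g w + (γ/2)‖w - w_prev‖²` over `Ω` (γ > 0), then for every `w ∈ Ω`,
`((λ+γ)/γ)‖w₊ - w‖² ≤ ‖w_prev - w‖² - ‖w_prev - w₊‖² - (2/γ)(g w₊ - g w)`. -/
theorem stmt_1 {E : Type*} [NormedAddCommGroup E] [InnerProductSpace ℝ E]
    {Ω : Set E} (hne : Ω.Nonempty) (hconv : Convex ℝ Ω)
    {lam : ℝ} (hlam : 0 ≤ lam) {g : E → ℝ} (hg : StrongConvexOn Ω lam g)
    (wprev : E) {γ : ℝ} (hγ : 0 < γ)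
    {wplus : E} (hmem : wplus ∈ Ω)
    (hmin : IsMinOn (fun w => g w + γ / 2 * ‖w - wprev‖ ^ 2) Ω wplus) :
    ∀ w ∈ Ω,
      (lam + γ) / γ * ‖wplus - w‖ ^ 2 ≤
        ‖wprev - w‖ ^ 2 - ‖wprev - wplus‖ ^ 2 - 2 / γ * (g wplus - g w) :=
  stmt_1_general hconv hg wprev hγ hmem hmin
end

section
/- Let E be a real inner product space, Ω ⊆ E a nonempty convex set, n ≥ 1, μ > 0, and L > 0. Let F, F' : E → ℝ be such that F is μ-strongly convex on Ω and F'(w) − F(w) = (1/n)(ℓ'(w) − ℓ(w)) for all w ∈ Ω, where ℓ and ℓ' are L-Lipschitz on Ω. If ŵ ∈ Ω minimizes F over Ω and ŵ' ∈ Ω minimizes F' over Ω, then ‖ŵ − ŵ'‖ ≤ 4L/(μn). -/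
/-!
Strong convexity gives quadratic growth around the minimizer `ŵ` of `F`:
`μ/2 ‖ŵ - ŵ'‖² ≤ F ŵ' - F ŵ`. Since `ŵ'` minimizes `F'`, this gap is at most the variation of
`F' - F = (ℓ' - ℓ)/n` between `ŵ` and `ŵ'`, hence at most `(2L/n) ‖ŵ - ŵ'‖`. Dividing by
`‖ŵ - ŵ'‖` gives the bound.
-/

open Filter Set Topology

lemma le_div_of_mul_sq_le_mul {a b d : ℝ} (ha : 0 < a) (hb : 0 ≤ b) (hd : 0 ≤ d)
    (h : a * d ^ 2 ≤ b * d) : d ≤ b / a := by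
  obtain rfl | hd := hd.eq_or_lt
  · positivity
  rw [le_div_iff₀ ha, mul_comm]
  exact le_of_mul_le_mul_right (by linarith [sq d]) hd

section StrongConvexOn

variable {E : Type*} [NormedAddCommGroup E] [NormedSpace ℝ E] {s : Set E} {m K : ℝ}
  {f g : E → ℝ} {x y : E}

lemma StrongConvexOn.sq_norm_sub_le_of_isMinOn (hf : StrongConvexOn s m f) (hx : x ∈ s)
    (hmin : IsMinOn f s x) (hy : y ∈ s) : m / 2 * ‖x - y‖ ^ 2 ≤ f y - f x := by
  -- Comparing `f x` with `f (a • x + (1 - a) • y)` gives the bound up to a factor `a < 1`;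
  -- letting `a → 1` removes it.
  have hseg : ∀ a ∈ Ioo (0 : ℝ) 1, a * (m / 2 * ‖x - y‖ ^ 2) ≤ f y - f x := by
    rintro a ⟨ha₀, ha₁⟩
    have hb : 0 ≤ 1 - a := sub_nonneg.2 ha₁.le
    have hconv := hf.2 hx hy ha₀.le hb (add_sub_cancel a 1)
    have hmin_seg : f x ≤ f (a • x + (1 - a) • y) :=
      hmin (hf.1 hx hy ha₀.le hb (add_sub_cancel a 1))
    simp only [smul_eq_mul] at hconv
    exact le_of_mul_le_mul_left (by linear_combination hmin_seg + hconv) (sub_pos.2 ha₁)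
  have hlim : Tendsto (fun a : ℝ ↦ a * (m / 2 * ‖x - y‖ ^ 2)) (𝓝[<] 1)
      (𝓝 (m / 2 * ‖x - y‖ ^ 2)) := by
    simpa using ((tendsto_id (x := 𝓝 (1 : ℝ))).mul_const (m / 2 * ‖x - y‖ ^ 2)).mono_left
      nhdsWithin_le_nhds
  exact le_of_tendsto hlim (eventually_of_mem (Ioo_mem_nhdsLT zero_lt_one) hseg)

lemma StrongConvexOn.norm_sub_le_of_isMinOn_of_isMinOn (hf : StrongConvexOn s m f) (hm : 0 < m)
    (hK : 0 ≤ K) (hx : x ∈ s) (hfx : IsMinOn f s x) (hy : y ∈ s) (hgy : IsMinOn g s y)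
    (hgf : (g x - f x) - (g y - f y) ≤ K * ‖x - y‖) :
    ‖x - y‖ ≤ 2 * K / m := by
  have hgrowth := hf.sq_norm_sub_le_of_isMinOn hx hfx hy
  have hgap : f y - f x ≤ K * ‖x - y‖ := by linarith [show g y ≤ g x from hgy hx]
  have := le_div_of_mul_sq_le_mul (by positivity) hK (norm_nonneg _) (hgrowth.trans hgap)
  rwa [div_div_eq_mul_div, mul_comm K] at this

end StrongConvexOn

theorem stmt_2_general {E : Type*} [NormedAddCommGroup E] [InnerProductSpace ℝ E]
    {Ω : Set E}
    {n : ℕ} {m L : ℝ} (hm : 0 < m) (hL : 0 < L)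
    {F F' l l' : E → ℝ}
    (hF : StrongConvexOn Ω m F)
    (hrel : ∀ w ∈ Ω, F' w - F w = (1 / (n : ℝ)) * (l' w - l w))
    (hlip : ∀ w ∈ Ω, ∀ w' ∈ Ω, |l w - l w'| ≤ L * ‖w - w'‖)
    (hlip' : ∀ w ∈ Ω, ∀ w' ∈ Ω, |l' w - l' w'| ≤ L * ‖w - w'‖)
    {what what' : E} (hmem : what ∈ Ω) (hminF : IsMinOn F Ω what)
    (hmem' : what' ∈ Ω) (hminF' : IsMinOn F' Ω what') :
    ‖what - what'‖ ≤ 4 * L / (m * n) := by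
  have hperturb : (F' what - F what) - (F' what' - F what') ≤
      1 / (n : ℝ) * (2 * L) * ‖what - what'‖ := by
    have hl := abs_le.mp (hlip what hmem what' hmem')
    have hl' := abs_le.mp (hlip' what hmem what' hmem')
    rw [hrel what hmem, hrel what' hmem', ← mul_sub, mul_assoc]
    exact mul_le_mul_of_nonneg_left (by linarith) (by positivity)
  convert hF.norm_sub_le_of_isMinOn_of_isMinOn hm (by positivity) hmem hminF hmem' hminF'
    hperturb using 1
  ring

/-- Replace-one-sample stability: if `F` is `μ`-strongly convex on `Ω`,
`F' - F = (1/n)(ℓ' - ℓ)` on `Ω` with `ℓ, ℓ'` `L`-Lipschitz on `Ω`, and `ŵ, ŵ'` minimize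
`F, F'` over `Ω` respectively, then `‖ŵ - ŵ'‖ ≤ 4L/(μn)`. -/
theorem stmt_2 {E : Type*} [NormedAddCommGroup E] [InnerProductSpace ℝ E]
    {Ω : Set E} (hne : Ω.Nonempty) (hconv : Convex ℝ Ω)
    {n : ℕ} (hn : 1 ≤ n) {m L : ℝ} (hm : 0 < m) (hL : 0 < L)
    {F F' l l' : E → ℝ}
    (hF : StrongConvexOn Ω m F)
    (hrel : ∀ w ∈ Ω, F' w - F w = (1 / (n : ℝ)) * (l' w - l w))
    (hlip : ∀ w ∈ Ω, ∀ w' ∈ Ω, |l w - l w'| ≤ L * ‖w - w'‖)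
    (hlip' : ∀ w ∈ Ω, ∀ w' ∈ Ω, |l' w - l' w'| ≤ L * ‖w - w'‖)
    {what what' : E} (hmem : what ∈ Ω) (hminF : IsMinOn F Ω what)
    (hmem' : what' ∈ Ω) (hminF' : IsMinOn F' Ω what') :
    ‖what - what'‖ ≤ 4 * L / (m * n) :=
  stmt_2_general hm hL hF hrel hlip hlip' hmem hminF hmem' hminF'
end

section
/- Let r : E → ℝ be γ-strongly convex on Ω with λ + γ > 0. For a tuple Z = (ξ_1, …, ξ_n) ∈ Ξⁿ define the empirical loss Ĝ_Z(w) = (1/n)Σ_{i=1}^n ℓ(ξ_i, w), the regularized empirical objective F̂_Z(w) = Ĝ_Z(w) + r(w), and let ŵ_Z ∈ Ω be the unique minimizer of F̂_Z over Ω; write G(w) = ∫ ℓ(ξ, w) dμ(ξ) for the population loss. Then, with Z distributed according to the product measure μ^⊗n on Ξⁿ, |E_Z[G(ŵ_Z) − Ĝ_Z(ŵ_Z)]| ≤ 4L²/((λ + γ)n). -/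
/-! The regularized empirical objective `F̂_Z` is `(λ + γ)`-strongly convex, so it grows at least
quadratically away from its minimizer `ŵ_Z`. If `Z` and `Z'` differ in `k` coordinates, then
`F̂_Z - F̂_Z'` is `2Lk/n`-Lipschitz on `Ω`, and comparing the two quadratic growth bounds gives
`‖ŵ_Z - ŵ_Z'‖ ≤ 4Lk/((λ + γ)n)` (uniform stability).

Draw an independent ghost sample `ξ'`. Swapping `ξ_i` with `ξ'` preserves `μ^⊗n ⊗ μ`, hence
`E[Ĝ_Z(ŵ_Z)] = (1/n) ∑ᵢ E[ℓ(ξ', ŵ_{Z⁽ⁱ⁾})]`, where `Z⁽ⁱ⁾` is `Z` with `ξ_i` replaced by `ξ'`,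
while `E[G(ŵ_Z)] = E[ℓ(ξ', ŵ_Z)]`. Each difference `ℓ(ξ', ŵ_Z) - ℓ(ξ', ŵ_{Z⁽ⁱ⁾})` is at most
`L · 4L/((λ + γ)n)` by the Lipschitz bound and stability with `k = 1`. -/

open MeasureTheory Function

theorem ConvexOn.fun_sum {ι E : Type*} [AddCommGroup E] [Module ℝ E] {s : Set E}
    (hs : Convex ℝ s) (t : Finset ι) {f : ι → E → ℝ} (hf : ∀ i ∈ t, ConvexOn ℝ s (f i)) :
    ConvexOn ℝ s fun x => ∑ i ∈ t, f i x := by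
  classical
  induction t using Finset.induction_on with
  | empty => simpa using convexOn_const 0 hs
  | insert i t hi ih =>
    simp_rw [Finset.sum_insert hi]
    exact (hf i (t.mem_insert_self i)).add (ih fun j hj => hf j (Finset.mem_insert_of_mem hj))

theorem StrongConvexOn.avg_add {E : Type*} [NormedAddCommGroup E] [InnerProductSpace ℝ E]
    {s : Set E} {n : ℕ} (hn : n ≠ 0) {f : Fin n → E → ℝ} {g : E → ℝ} {m m' : ℝ}
    (hf : ∀ i, StrongConvexOn s m (f i)) (hg : StrongConvexOn s m' g) :
    StrongConvexOn s (m + m') fun x => (1 / (n : ℝ)) * ∑ i, f i x + g x := by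
  simp_rw [strongConvexOn_iff_convex] at hf hg ⊢
  have hs : Convex ℝ s := hg.1
  refine (((ConvexOn.fun_sum hs Finset.univ fun i _ => hf i).smul
    (by positivity : (0 : ℝ) ≤ 1 / n)).add hg).congr fun x _ => ?_
  simp only [Pi.add_apply, smul_eq_mul, Finset.sum_sub_distrib, Finset.sum_const,
    Finset.card_univ, Fintype.card_fin, nsmul_eq_mul]
  field_simp
  ring

theorem StrongConvexOn.mul_sq_norm_sub_le_of_isMinOn {E : Type*} [NormedAddCommGroup E]
    [InnerProductSpace ℝ E] {s : Set E} {m : ℝ} {f : E → ℝ} {u v : E}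
    (hf : StrongConvexOn s m f) (hu : u ∈ s) (hv : v ∈ s) (hmin : IsMinOn f s u) :
    m / 4 * ‖u - v‖ ^ 2 ≤ f v - f u := by
  have half : (0 : ℝ) ≤ 1 / 2 := by norm_num
  have hmid := hf.2 hu hv half half (by norm_num)
  have hle := isMinOn_iff.1 hmin _ (hf.1 hu hv half half (by norm_num))
  simp only [smul_eq_mul] at hmid hle
  linarith

noncomputable def regularizedEmpiricalRisk {Ξ E : Type*} {n : ℕ} (l : Ξ → E → ℝ) (r : E → ℝ)
    (Z : Fin n → Ξ) (w : E) : ℝ :=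
  (1 / (n : ℝ)) * ∑ i, l (Z i) w + r w

theorem norm_sub_le_of_isMinOn_regularizedEmpiricalRisk {Ξ E : Type*} [NormedAddCommGroup E]
    [InnerProductSpace ℝ E] {Ω : Set E} {n : ℕ} (hn : n ≠ 0) {l : Ξ → E → ℝ} {r : E → ℝ}
    {lam γ L : ℝ} (hlg : 0 < lam + γ) (hL : 0 ≤ L) (hl : ∀ ξ, StrongConvexOn Ω lam (l ξ))
    (hr : StrongConvexOn Ω γ r) (hlip : ∀ ξ, ∀ w ∈ Ω, ∀ w' ∈ Ω, |l ξ w - l ξ w'| ≤ L * ‖w - w'‖)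
    {Z Z' : Fin n → Ξ} {D : Finset (Fin n)} (hD : ∀ i ∉ D, Z i = Z' i) {u v : E} (hu : u ∈ Ω)
    (hv : v ∈ Ω) (hminu : IsMinOn (regularizedEmpiricalRisk l r Z) Ω u)
    (hminv : IsMinOn (regularizedEmpiricalRisk l r Z') Ω v) :
    ‖u - v‖ ≤ 4 * L * D.card / ((lam + γ) * n) := by
  have hgapZ := (StrongConvexOn.avg_add hn (fun i => hl (Z i)) hr).mul_sq_norm_sub_le_of_isMinOn
    hu hv hminu
  have hgapZ' := (StrongConvexOn.avg_add hn (fun i => hl (Z' i)) hr).mul_sq_norm_sub_le_of_isMinOn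
    hv hu hminv
  rw [norm_sub_rev] at hgapZ'
  set d := ‖u - v‖
  have hterm : ∀ i, (l (Z i) v - l (Z i) u) - (l (Z' i) v - l (Z' i) u)
      ≤ if i ∈ D then 2 * L * d else 0 := by
    intro i
    split_ifs with hi
    · have h1 := (abs_le.1 (hlip (Z i) v hv u hu)).2
      have h2 := (abs_le.1 (hlip (Z' i) v hv u hu)).1
      rw [norm_sub_rev] at h1 h2
      linarith
    · rw [hD i hi, sub_self]
  have hsum := Finset.sum_le_sum fun i (_ : i ∈ Finset.univ) => hterm i
  rw [Finset.sum_ite_mem, Finset.univ_inter, Finset.sum_const, nsmul_eq_mul] at hsum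
  have hquad : (lam + γ) / 2 * d ^ 2 ≤ 1 / (n : ℝ) * (D.card * (2 * L * d)) := by
    have key : (lam + γ) / 2 * d ^ 2 ≤ 1 / (n : ℝ) *
        ∑ i, ((l (Z i) v - l (Z i) u) - (l (Z' i) v - l (Z' i) u)) := by
      simp only [Finset.sum_sub_distrib] at hgapZ hgapZ' ⊢
      linarith
    exact key.trans (mul_le_mul_of_nonneg_left hsum (by positivity))
  rcases (norm_nonneg (u - v) : 0 ≤ d).eq_or_lt with hd | hd
  · exact hd.symm.le.trans (by positivity)
  · have hlin : (lam + γ) / 2 * d ≤ 2 * L * D.card / n := by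
      refine le_of_mul_le_mul_right ?_ hd
      calc (lam + γ) / 2 * d * d = (lam + γ) / 2 * d ^ 2 := by ring
        _ ≤ 1 / (n : ℝ) * (D.card * (2 * L * d)) := hquad
        _ = 2 * L * D.card / n * d := by ring
    calc d = 2 / (lam + γ) * ((lam + γ) / 2 * d) := by field_simp
      _ ≤ 2 / (lam + γ) * (2 * L * D.card / n) := by gcongr
      _ = 4 * L * D.card / ((lam + γ) * n) := by rw [div_mul_div_comm]; ring

theorem aestronglyMeasurable_apply_of_lipschitzOn {α X : Type*} [MeasurableSpace α]
    {P : Measure α} [SeminormedAddCommGroup X] {Ω : Set X} {f : α → X → ℝ} {K : ℝ}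
    (hK : 0 ≤ K) (hf : ∀ x ∈ Ω, AEStronglyMeasurable (f · x) P)
    (hlip : ∀ a, ∀ x ∈ Ω, ∀ y ∈ Ω, |f a x - f a y| ≤ K * ‖x - y‖)
    {W : α → X} (hW : AEStronglyMeasurable W P) (hWΩ : ∀ᵐ a ∂P, W a ∈ Ω) :
    AEStronglyMeasurable (fun a => f a (W a)) P := by
  obtain ⟨C, hCΩ, hCc, hCd⟩ := (hW.stronglyMeasurable_mk.isSeparable_range.mono
    (Set.inter_subset_left : Set.range (hW.mk W) ∩ Ω ⊆ _)).exists_countable_dense_subset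
  have : Countable C := hCc.to_subtype
  -- `f a (W a)` is the infimum of the countably many upper bounds `f a c + K * ‖W a - c‖`
  have hbound : ∀ c : C, AEMeasurable (fun a => f a c + K * ‖hW.mk W a - c‖) P := fun c =>
    (hf c (hCΩ c.2).2).aemeasurable.add ((hW.stronglyMeasurable_mk.sub
      stronglyMeasurable_const).norm.measurable.aemeasurable.const_mul K)
  refine (AEMeasurable.iInf hbound).aestronglyMeasurable.congr ?_
  filter_upwards [hW.ae_eq_mk, hWΩ] with a hWa hΩa
  rw [← hWa]
  have hcl : W a ∈ closure C := hCd ⟨⟨a, hWa.symm⟩, hΩa⟩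
  have : Nonempty C := (closure_nonempty_iff.1 ⟨_, hcl⟩).to_subtype
  have hlow : ∀ c : C, f a (W a) ≤ f a c + K * ‖W a - c‖ := fun c => by
    linarith [(abs_le.1 (hlip a _ hΩa _ (hCΩ c.2).2)).2]
  refine le_antisymm (le_of_forall_pos_lt_add fun ε hε => ?_) (le_ciInf hlow)
  obtain ⟨c, hc, hdist⟩ := Metric.mem_closure_iff.1 hcl (ε / (2 * K + 1)) (by positivity)
  rw [dist_eq_norm, lt_div_iff₀ (by positivity)] at hdist
  have hup := (abs_le.1 (hlip a _ (hCΩ hc).2 _ hΩa)).2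
  rw [norm_sub_rev] at hup
  calc ⨅ c : C, f a c + K * ‖W a - c‖ ≤ f a c + K * ‖W a - c‖ :=
        ciInf_le ⟨_, Set.forall_mem_range.2 hlow⟩ ⟨c, hc⟩
    _ < f a (W a) + ε := by nlinarith [norm_nonneg (W a - c)]

theorem MeasureTheory.Integrable.of_norm_sub_le {α F : Type*} [MeasurableSpace α] {μ : Measure α}
    [IsFiniteMeasure μ] [NormedAddCommGroup F] {f g : α → F} {C : ℝ} (hg : Integrable g μ)
    (hf : AEStronglyMeasurable f μ) (hfg : ∀ x, ‖f x - g x‖ ≤ C) : Integrable f μ :=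
  (hg.norm.add (integrable_const C)).mono' hf (ae_of_all _ fun x => by
    simp only [Pi.add_apply]
    linarith [norm_sub_norm_le (f x) (g x), hfg x])

theorem measurePreserving_update_swap {ι Ξ : Type*} [Fintype ι] [DecidableEq ι]
    [MeasurableSpace Ξ] (μ : Measure Ξ) [SigmaFinite μ] (i : ι) :
    MeasurePreserving (fun p : (ι → Ξ) × Ξ => (update p.1 i p.2, p.1 i))
      ((Measure.pi fun _ => μ).prod μ) ((Measure.pi fun _ => μ).prod μ) := by
  let e := MeasurableEquiv.piOptionEquivProd fun _ : Option ι => Ξ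
  have he : MeasurePreserving e.symm ((Measure.pi fun _ => μ).prod μ)
      (Measure.pi fun _ : Option ι => μ) :=
    ⟨e.symm.measurable, Measure.pi_map_piOptionEquivProd fun _ => μ⟩
  have hσ := measurePreserving_arrowCongr' (fun _ : Option ι => μ) (fun _ => μ)
    (Equiv.swap none (some i)) (MeasurableEquiv.refl Ξ) fun _ => MeasurePreserving.id μ
  convert he.symm.comp (hσ.comp he) using 1
  funext ⟨Z, s⟩
  have he_symm : ∀ o, e.symm (Z, s) o = o.elim s Z := by rintro (_ | _) <;> rfl
  refine Prod.ext (funext fun j => ?_) ?_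
  · change update Z i s j = e.symm (Z, s) (Equiv.swap none (some i) (some j))
    rcases eq_or_ne j i with rfl | h
    · simp [he_symm]
    · simp [he_symm, Equiv.swap_apply_of_ne_of_ne, h]
  · change Z i = e.symm (Z, s) (Equiv.swap none (some i) none)
    simp [he_symm]

section GhostSample

variable {ι Ξ : Type*} [Fintype ι] [DecidableEq ι] [MeasurableSpace Ξ] {μ : Measure Ξ}
  [IsProbabilityMeasure μ] {φ : (ι → Ξ) → Ξ → ℝ}

theorem integrable_eval_self_of_integrable_update (i : ι)
    (hφ : Integrable (fun p : (ι → Ξ) × Ξ => φ (update p.1 i p.2) p.2)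
      ((Measure.pi fun _ => μ).prod μ)) :
    Integrable (fun Z => φ Z (Z i)) (Measure.pi fun _ => μ) := by
  refine (Integrable.comp_fst_iff (f := fun Z => φ Z (Z i)) (IsProbabilityMeasure.ne_zero μ)).1 ?_
  convert ((measurePreserving_update_swap μ i).integrable_comp hφ.1).2 hφ using 1
  funext p
  simp

theorem integral_eval_self_eq_integral_update (i : ι)
    (hφ : AEStronglyMeasurable (fun p : (ι → Ξ) × Ξ => φ (update p.1 i p.2) p.2)
      ((Measure.pi fun _ => μ).prod μ)) :
    ∫ Z, φ Z (Z i) ∂(Measure.pi fun _ => μ) =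
      ∫ p, φ (update p.1 i p.2) p.2 ∂((Measure.pi fun _ => μ).prod μ) := by
  have hswap := measurePreserving_update_swap μ i
  have h := integral_map hswap.measurable.aemeasurable (hswap.map_eq.symm ▸ hφ)
  rw [hswap.map_eq] at h
  simp [h, integral_fun_fst (f := fun Z => φ Z (Z i))]

theorem abs_integral_sub_avg_le_of_stable [Nonempty ι] {β : ℝ}
    (hφ : Integrable (fun p : (ι → Ξ) × Ξ => φ p.1 p.2) ((Measure.pi fun _ => μ).prod μ))
    (hφ_update : ∀ i, AEStronglyMeasurable (fun p : (ι → Ξ) × Ξ => φ (update p.1 i p.2) p.2)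
      ((Measure.pi fun _ => μ).prod μ))
    (hstab : ∀ Z i s, |φ Z s - φ (update Z i s) s| ≤ β) :
    |∫ Z, (∫ s, φ Z s ∂μ - (1 / (Fintype.card ι : ℝ)) * ∑ i, φ Z (Z i))
      ∂(Measure.pi fun _ => μ)| ≤ β := by
  set P := (Measure.pi fun _ : ι => μ).prod μ
  set c := 1 / (Fintype.card ι : ℝ)
  have hψ : ∀ i, Integrable (fun p : (ι → Ξ) × Ξ => φ (update p.1 i p.2) p.2) P := fun i =>
    hφ.of_norm_sub_le (hφ_update i) fun p => by
      rw [norm_sub_rev]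
      exact hstab p.1 i p.2
  have hgap : ∫ Z, (∫ s, φ Z s ∂μ - c * ∑ i, φ Z (Z i)) ∂(Measure.pi fun _ => μ) =
      ∫ p, c * ∑ i, (φ p.1 p.2 - φ (update p.1 i p.2) p.2) ∂P := by
    have hdiff : ∀ i, Integrable (fun p : (ι → Ξ) × Ξ => φ p.1 p.2 - φ (update p.1 i p.2) p.2) P :=
      fun i => hφ.sub (hψ i)
    have hdiag := fun i => integrable_eval_self_of_integrable_update i (hψ i)
    rw [integral_sub hφ.integral_prod_left
        ((integrable_finsetSum _ fun i _ => hdiag i).const_mul c),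
      ← integral_prod _ hφ, integral_const_mul, integral_const_mul,
      integral_finsetSum _ fun i _ => hdiag i, integral_finsetSum _ fun i _ => hdiff i]
    simp only [integral_eval_self_eq_integral_update _ (hφ_update _),
      integral_sub hφ (hψ _), Finset.sum_sub_distrib, Finset.sum_const, Finset.card_univ,
      nsmul_eq_mul, c]
    field_simp
    ring
  rw [hgap, ← Real.norm_eq_abs]
  refine (norm_integral_le_of_norm_le_const (C := β) (ae_of_all _ fun p => ?_)).trans_eq (by simp)
  calc ‖c * ∑ i, (φ p.1 p.2 - φ (update p.1 i p.2) p.2)‖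
      ≤ c * ∑ _i : ι, β := by
        rw [norm_mul, Real.norm_of_nonneg (by positivity)]
        gcongr
        exact (norm_sum_le _ _).trans (Finset.sum_le_sum fun i _ => hstab p.1 i p.2)
    _ = β := by simp [c]

end GhostSample

theorem stmt_3_general {E : Type*} [NormedAddCommGroup E] [InnerProductSpace ℝ E]
    {Ω : Set E}
    {Ξ : Type*} [MeasurableSpace Ξ] (μ : Measure Ξ) [IsProbabilityMeasure μ]
    (l : Ξ → E → ℝ) {lam L γ : ℝ} (hL : 0 < L) (hlg : 0 < lam + γ)
    (hscl : ∀ ξ, StrongConvexOn Ω lam (l ξ))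
    (hlip : ∀ ξ, ∀ w ∈ Ω, ∀ w' ∈ Ω, |l ξ w - l ξ w'| ≤ L * ‖w - w'‖)
    (r : E → ℝ) (hr : StrongConvexOn Ω γ r)
    {n : ℕ} (hn : 1 ≤ n)
    (G : E → ℝ) (hG : ∀ w, G w = ∫ ξ, l ξ w ∂μ)
    (hGint : ∀ w ∈ Ω, Integrable (fun ξ => l ξ w) μ)
    (what : (Fin n → Ξ) → E)
    (hmem : ∀ Z, what Z ∈ Ω)
    (hmin : ∀ Z, IsMinOn (fun w => (1 / (n : ℝ)) * ∑ i, l (Z i) w + r w) Ω (what Z))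
    (hmeas : AEStronglyMeasurable what (Measure.pi fun _ : Fin n => μ)) :
    |∫ Z, (G (what Z) - (1 / (n : ℝ)) * ∑ i, l (Z i) (what Z))
        ∂(Measure.pi fun _ : Fin n => μ)| ≤ 4 * L ^ 2 / ((lam + γ) * n) := by
  have : Nonempty (Fin n) := ⟨⟨0, hn⟩⟩
  have hstab : ∀ Z Z' (D : Finset (Fin n)), (∀ i ∉ D, Z i = Z' i) →
      ‖what Z - what Z'‖ ≤ 4 * L * D.card / ((lam + γ) * n) := fun Z Z' D hD =>
    norm_sub_le_of_isMinOn_regularizedEmpiricalRisk (by omega) hlg hL.le hscl hr hlip hD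
      (hmem Z) (hmem Z') (hmin Z) (hmin Z')
  have hstab_update : ∀ Z i s, ‖what Z - what (update Z i s)‖ ≤ 4 * L / ((lam + γ) * n) :=
    fun Z i s => by
      simpa using hstab Z _ {i} fun j hj => (update_of_ne (by simpa using hj) s Z).symm
  have hloss : ∀ g : (Fin n → Ξ) × Ξ → (Fin n → Ξ),
      AEStronglyMeasurable (what ∘ g) ((Measure.pi fun _ => μ).prod μ) →
      AEStronglyMeasurable (fun p => l p.2 (what (g p))) ((Measure.pi fun _ => μ).prod μ) :=
    fun g hg => aestronglyMeasurable_apply_of_lipschitzOn hL.le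
      (fun w hw => (hGint w hw).1.comp_snd) (fun p => hlip p.2) hg (ae_of_all _ fun _ => hmem _)
  obtain ⟨Z₀⟩ : Nonempty (Fin n → Ξ) := ⟨fun _ => (nonempty_of_isProbabilityMeasure μ).some⟩
  have hint : Integrable (fun p : (Fin n → Ξ) × Ξ => l p.2 (what p.1))
      ((Measure.pi fun _ => μ).prod μ) :=
    ((hGint _ (hmem Z₀)).comp_snd _).of_norm_sub_le (hloss Prod.fst hmeas.comp_fst) fun p =>
      (hlip p.2 _ (hmem p.1) _ (hmem Z₀)).trans
        (mul_le_mul_of_nonneg_left (hstab p.1 Z₀ Finset.univ (by simp)) hL.le)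
  have key := abs_integral_sub_avg_le_of_stable (φ := fun Z s => l s (what Z))
    (β := L * (4 * L / ((lam + γ) * n))) hint
    (fun i => hloss _ (hmeas.comp_measurePreserving
      (measurePreserving_fst.comp (measurePreserving_update_swap μ i))))
    (fun Z i s => (hlip s _ (hmem Z) _ (hmem _)).trans
      (mul_le_mul_of_nonneg_left (hstab_update Z i s) hL.le))
  simp only [hG, Fintype.card_fin] at key ⊢
  exact key.trans_eq (by ring)

/-- Stability of regularized ERM: with `ℓ(ξ,·)` convex, `λ`-strongly convex
and `L`-Lipschitz on `Ω`, regularizer `r` `γ`-strongly convex on `Ω` with `λ + γ > 0`, and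
`ŵ_Z` the minimizer over `Ω` of `F̂_Z = Ĝ_Z + r` for a sample `Z ∼ μ^⊗n`, one has
`|E_Z[G(ŵ_Z) - Ĝ_Z(ŵ_Z)]| ≤ 4L²/((λ+γ)n)` where `G` is the population loss. -/
theorem stmt_3 {E : Type*} [NormedAddCommGroup E] [InnerProductSpace ℝ E]
    {Ω : Set E} (hne : Ω.Nonempty) (hcl : IsClosed Ω) (hconv : Convex ℝ Ω)
    {Ξ : Type*} [MeasurableSpace Ξ] (μ : Measure Ξ) [IsProbabilityMeasure μ]
    (l : Ξ → E → ℝ) {lam L γ : ℝ} (hlam : 0 ≤ lam) (hL : 0 < L) (hlg : 0 < lam + γ)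
    (hconvl : ∀ ξ, ConvexOn ℝ Ω (l ξ))
    (hscl : ∀ ξ, StrongConvexOn Ω lam (l ξ))
    (hlip : ∀ ξ, ∀ w ∈ Ω, ∀ w' ∈ Ω, |l ξ w - l ξ w'| ≤ L * ‖w - w'‖)
    (r : E → ℝ) (hr : StrongConvexOn Ω γ r)
    {n : ℕ} (hn : 1 ≤ n)
    (G : E → ℝ) (hG : ∀ w, G w = ∫ ξ, l ξ w ∂μ)
    (hGint : ∀ w ∈ Ω, Integrable (fun ξ => l ξ w) μ)
    (what : (Fin n → Ξ) → E)
    (hmem : ∀ Z, what Z ∈ Ω)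
    (hmin : ∀ Z, IsMinOn (fun w => (1 / (n : ℝ)) * ∑ i, l (Z i) w + r w) Ω (what Z))
    (hmeas : AEStronglyMeasurable what (Measure.pi fun _ : Fin n => μ))
    (hint1 : Integrable (fun Z => G (what Z)) (Measure.pi fun _ : Fin n => μ))
    (hint2 : Integrable (fun Z => (1 / (n : ℝ)) * ∑ i, l (Z i) (what Z))
      (Measure.pi fun _ : Fin n => μ)) :
    |∫ Z, (G (what Z) - (1 / (n : ℝ)) * ∑ i, l (Z i) (what Z))
        ∂(Measure.pi fun _ : Fin n => μ)| ≤ 4 * L ^ 2 / ((lam + γ) * n) :=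
  stmt_3_general μ l hL hlg hscl hlip r hr hn G hG hGint what hmem hmin hmeas
end

section
/- Let (u_T)_{T≥0} be a sequence of nonnegative reals, (S_T)_{T≥0} a nondecreasing sequence of reals with S_0 ≥ u_0², and (λ_t)_{t≥1} nonnegative reals, such that for all T ≥ 1: u_T² ≤ S_T + Σ_{t=1}^T λ_t u_t. Then for all T ≥ 1: u_T ≤ (1/2)Σ_{t=1}^T λ_t + (S_T + ((1/2)Σ_{t=1}^T λ_t)²)^{1/2}, and consequently u_T ≤ √(S_T) + Σ_{t=1}^T λ_t. -/
lemma quad_bound (x b c : ℝ) (hb : 0 ≤ b) (hc : 0 ≤ c) (h : x ^ 2 ≤ c + b * x) :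
    x ≤ (1 / 2) * b + Real.sqrt (c + ((1 / 2) * b) ^ 2) := by
  have h1 : (x - (1 / 2) * b) ^ 2 ≤ c + ((1 / 2) * b) ^ 2 := by nlinarith
  have h2 := Real.sqrt_le_sqrt h1
  rw [Real.sqrt_sq_eq_abs] at h2
  have := le_abs_self (x - (1 / 2) * b)
  linarith

/-- Recursion-resolving lemma: if `u_T² ≤ S_T + Σ_{t=1}^T λ_t u_t` for all
`T ≥ 1`, with `u` nonnegative, `S` nondecreasing, `S_0 ≥ u_0²`, and `λ_t ≥ 0`, then
`u_T ≤ (1/2)Σ λ_t + √(S_T + ((1/2)Σ λ_t)²) ≤ √S_T + Σ λ_t` for all `T ≥ 1`. -/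
theorem stmt_12 (u S lam : ℕ → ℝ)
    (hu : ∀ T, 0 ≤ u T)
    (hSmono : Monotone S)
    (hS0 : u 0 ^ 2 ≤ S 0)
    (hlam : ∀ t, 0 ≤ lam t)
    (hrec : ∀ T, 1 ≤ T → u T ^ 2 ≤ S T + ∑ t ∈ Finset.Icc 1 T, lam t * u t) :
    ∀ T, 1 ≤ T →
      u T ≤ (1 / 2) * ∑ t ∈ Finset.Icc 1 T, lam t +
          Real.sqrt (S T + ((1 / 2) * ∑ t ∈ Finset.Icc 1 T, lam t) ^ 2) ∧
      u T ≤ Real.sqrt (S T) + ∑ t ∈ Finset.Icc 1 T, lam t := by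
  intro T hT
  set Λ := ∑ t ∈ Finset.Icc 1 T, lam t with hΛ
  have hΛ0 : 0 ≤ Λ := Finset.sum_nonneg fun t _ => hlam t
  have hST : 0 ≤ S T := le_trans (le_trans (sq_nonneg (u 0)) hS0) (hSmono (Nat.zero_le T))
  obtain ⟨k, hk, hkmax⟩ := Finset.exists_max_image (Finset.Icc 0 T) u ⟨T, by simp⟩
  have hkT : k ≤ T := (Finset.mem_Icc.mp hk).2
  have hM : u k ^ 2 ≤ S T + Λ * u k := by
    rcases Nat.eq_zero_or_pos k with hk0 | hk1
    · subst hk0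
      have : S 0 ≤ S T := hSmono (Nat.zero_le T)
      have : 0 ≤ Λ * u 0 := mul_nonneg hΛ0 (hu 0)
      nlinarith
    · have h1 := hrec k hk1
      have h2 : ∑ t ∈ Finset.Icc 1 k, lam t * u t ≤ ∑ t ∈ Finset.Icc 1 T, lam t * u k := by
        calc ∑ t ∈ Finset.Icc 1 k, lam t * u t
            ≤ ∑ t ∈ Finset.Icc 1 k, lam t * u k := by
              apply Finset.sum_le_sum
              intro t ht
              have ht' : t ∈ Finset.Icc 0 T := by
                simp only [Finset.mem_Icc] at ht ⊢
                omega
              exact mul_le_mul_of_nonneg_left (hkmax t ht') (hlam t)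
          _ ≤ ∑ t ∈ Finset.Icc 1 T, lam t * u k := by
              apply Finset.sum_le_sum_of_subset_of_nonneg
              · exact Finset.Icc_subset_Icc_right hkT
              · exact fun t _ _ => mul_nonneg (hlam t) (hu k)
      have h3 : S k ≤ S T := hSmono hkT
      have h4 : ∑ t ∈ Finset.Icc 1 T, lam t * u k = Λ * u k := by
        rw [hΛ, Finset.sum_mul]
      linarith
  have hkb : u k ≤ (1 / 2) * Λ + Real.sqrt (S T + ((1 / 2) * Λ) ^ 2) :=
    quad_bound (u k) Λ (S T) hΛ0 hST hM
  have huT : u T ≤ u k := hkmax T (by simp)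
  have first : u T ≤ (1 / 2) * Λ + Real.sqrt (S T + ((1 / 2) * Λ) ^ 2) := le_trans huT hkb
  refine ⟨first, ?_⟩
  have hs : Real.sqrt (S T + ((1 / 2) * Λ) ^ 2) ≤ Real.sqrt (S T) + (1 / 2) * Λ := by
    have h5 : S T + ((1 / 2) * Λ) ^ 2 ≤ (Real.sqrt (S T) + (1 / 2) * Λ) ^ 2 := by
      have := Real.sq_sqrt hST
      have := Real.sqrt_nonneg (S T)
      nlinarith
    calc Real.sqrt (S T + ((1 / 2) * Λ) ^ 2)
        ≤ Real.sqrt ((Real.sqrt (S T) + (1 / 2) * Λ) ^ 2) := Real.sqrt_le_sqrt h5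
      _ = Real.sqrt (S T) + (1 / 2) * Λ := by
          rw [Real.sqrt_sq (by positivity)]
  linarith
end

section
/- Assume each ℓ(ξ, ·) is convex, λ-strongly convex on Ω (λ ≥ 0), L-Lipschitz on Ω, differentiable, and β-smooth, so that φ is differentiable, λ-strongly convex on Ω, β-smooth, with ∇φ(w) = ∫ ∇_w ℓ(ξ, w) dμ(ξ) and ‖∇_w ℓ(ξ, w)‖, ‖∇φ(w)‖ ≤ L on Ω. Fix w_prev ∈ Ω and γ > β. Let I = (ξ_1, …, ξ_b) ∼ μ^⊗b and let w₊ be the unique minimizer over Ω of w ↦ ⟨∇φ_I(w_prev), w⟩ + (γ/2)‖w − w_prev‖² (one minibatch SGD step). Then E_I[φ(w₊) − φ(w*)] ≤ 2L²/((γ − β)b) + ((γ − λ)/2)‖w* − w_prev‖² − (γ/2)·E_I‖w* − w₊‖². -/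
/-!
The proximal step is characterised by the variational inequality
`0 ≤ ⟪g + γ (w₊ - w_prev), w - w₊⟫` for `w ∈ Ω`, where `g` is the minibatch gradient.
Combining it (at `w = w*`) with strong convexity of `φ` from `w_prev` to `w*`, `β`-smoothness
from `w_prev` to `w₊`, and Young's inequality with weight `γ - β` against the gradient error
`Δ = ∇φ(w_prev) - g`, gives a pointwise bound whose only random terms are
`‖Δ‖² / (2(γ - β))` and `⟪Δ, w_prev - w*⟫`. Since `-Δ` is the sample mean of `b` i.i.d. centred
vectors of norm at most `2L`, the second term has expectation zero, and by independence the
cross terms of `E‖Δ‖²` vanish, leaving `E‖Δ‖² ≤ 4L²/b`.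
-/

open MeasureTheory ProbabilityTheory
open scoped RealInnerProductSpace

section SampleMean

variable {Ξ E ι : Type*} [MeasurableSpace Ξ] {μ : Measure Ξ} [IsProbabilityMeasure μ]
  [NormedAddCommGroup E] [InnerProductSpace ℝ E] [Fintype ι]

lemma integral_inner_comp_eval_of_ne [CompleteSpace E] {Y : Ξ → E} (hY : Integrable Y μ)
    {j k : ι} (hjk : j ≠ k) :
    ∫ I, ⟪Y (I j), Y (I k)⟫ ∂Measure.pi (fun _ : ι => μ) = ⟪∫ ξ, Y ξ ∂μ, ∫ ξ, Y ξ ∂μ⟫ := by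
  have hind : IndepFun (fun I : ι → Ξ => I j) (fun I => I k) (Measure.pi fun _ => μ) :=
    (iIndepFun_pi (X := fun _ => id) fun _ => aemeasurable_id).indepFun hjk
  have hmap : ∀ i : ι, (Measure.pi fun _ : ι => μ).map (fun I => I i) = μ :=
    fun i => (measurePreserving_eval (fun _ => μ) i).map_eq
  have := hind.integral_bilin_comp_comp (f := Y) (g := Y) (measurable_pi_apply j).aemeasurable
    (measurable_pi_apply k).aemeasurable (by rwa [hmap]) (by rwa [hmap]) (innerSL ℝ)
  rwa [integral_comp_eval (μ := fun _ => μ) hY.1, integral_comp_eval (μ := fun _ => μ) hY.1] at this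

lemma integrable_inner_comp_eval {Y : Ξ → E} (hY : MemLp Y 2 μ) (j k : ι) :
    Integrable (fun I => ⟪Y (I j), Y (I k)⟫) (Measure.pi fun _ : ι => μ) := by
  have hY' : ∀ i : ι, MemLp (fun I : ι → Ξ => Y (I i)) 2 (Measure.pi fun _ => μ) :=
    fun i => hY.comp_measurePreserving (measurePreserving_eval _ i)
  exact memLp_one_iff_integrable.1 ((innerSL ℝ).memLp_of_bilin 1 (hY' j) (hY' k))

lemma integral_norm_sum_comp_eval_sq [CompleteSpace E] {Y : Ξ → E} (hY : MemLp Y 2 μ)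
    (hY0 : ∫ ξ, Y ξ ∂μ = 0) :
    ∫ I, ‖∑ j, Y (I j)‖ ^ 2 ∂Measure.pi (fun _ : ι => μ) =
      Fintype.card ι * ∫ ξ, ‖Y ξ‖ ^ 2 ∂μ := by
  classical
  have hexpand : ∀ I : ι → Ξ, ‖∑ j, Y (I j)‖ ^ 2 = ∑ j, ∑ k, ⟪Y (I j), Y (I k)⟫ := fun I => by
    rw [← real_inner_self_eq_norm_sq, sum_inner]
    simp_rw [inner_sum]
  have hterm : ∀ j k : ι, ∫ I, ⟪Y (I j), Y (I k)⟫ ∂Measure.pi (fun _ : ι => μ) =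
      if j = k then ∫ ξ, ‖Y ξ‖ ^ 2 ∂μ else 0 := fun j k => by
    split_ifs with hjk
    · subst hjk
      simp only [real_inner_self_eq_norm_sq]
      exact integral_comp_eval (μ := fun _ => μ) (hY.1.norm.pow 2)
    · rw [integral_inner_comp_eval_of_ne (hY.integrable one_le_two) hjk, hY0, inner_zero_left]
  simp_rw [hexpand]
  rw [integral_finsetSum _ fun j _ => integrable_finsetSum _ fun k _ =>
    integrable_inner_comp_eval hY j k]
  simp_rw [integral_finsetSum _ fun k _ => integrable_inner_comp_eval hY _ k, hterm,
    Finset.sum_ite_eq, Finset.mem_univ, if_true, Finset.sum_const, Finset.card_univ, nsmul_eq_mul]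

variable (ι) in
noncomputable def sampleMean (g : Ξ → E) (I : ι → Ξ) : E :=
  (Fintype.card ι : ℝ)⁻¹ • ∑ j, g (I j)

lemma memLp_sampleMean {p : ENNReal} {g : Ξ → E} (hg : MemLp g p μ) :
    MemLp (sampleMean ι g) p (Measure.pi fun _ : ι => μ) := by
  have hsum := memLp_finsetSum Finset.univ fun j _ =>
    hg.comp_measurePreserving (measurePreserving_eval (fun _ : ι => μ) j)
  exact hsum.const_smul (Fintype.card ι : ℝ)⁻¹

lemma integral_sampleMean [CompleteSpace E] [Nonempty ι] {g : Ξ → E} (hg : Integrable g μ) :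
    ∫ I, sampleMean ι g I ∂Measure.pi (fun _ : ι => μ) = ∫ ξ, g ξ ∂μ := by
  simp only [sampleMean]
  rw [integral_smul, integral_finsetSum _ fun j _ => integrable_comp_eval hg]
  simp_rw [integral_comp_eval (μ := fun _ => μ) hg.1]
  rw [Finset.sum_const, Finset.card_univ, ← Nat.cast_smul_eq_nsmul ℝ, smul_smul,
    inv_mul_cancel₀ (by positivity), one_smul]

lemma integral_integral_sub_sampleMean [CompleteSpace E] [Nonempty ι] {g : Ξ → E}
    (hg : Integrable g μ) :
    ∫ I, (∫ ξ, g ξ ∂μ - sampleMean ι g I) ∂Measure.pi (fun _ : ι => μ) = 0 := by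
  rw [integral_sub (integrable_const _) (memLp_one_iff_integrable.1
      (memLp_sampleMean (memLp_one_iff_integrable.2 hg))),
    integral_sampleMean hg, integral_const, probReal_univ, one_smul, sub_self]

lemma integral_norm_sampleMean_sub_sq [CompleteSpace E] [Nonempty ι] {g : Ξ → E}
    (hg : MemLp g 2 μ) :
    ∫ I, ‖sampleMean ι g I - ∫ ξ, g ξ ∂μ‖ ^ 2 ∂Measure.pi (fun _ : ι => μ) =
      (Fintype.card ι : ℝ)⁻¹ * ∫ ξ, ‖g ξ - ∫ ξ', g ξ' ∂μ‖ ^ 2 ∂μ := by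
  set m := ∫ ξ, g ξ ∂μ
  have hcard : (Fintype.card ι : ℝ) ≠ 0 := by positivity
  have hcenter : ∀ I : ι → Ξ,
      sampleMean ι g I - m = (Fintype.card ι : ℝ)⁻¹ • ∑ j, (g (I j) - m) := fun I => by
    rw [Finset.sum_sub_distrib, smul_sub, Finset.sum_const, Finset.card_univ,
      ← Nat.cast_smul_eq_nsmul ℝ, smul_smul, inv_mul_cancel₀ hcard, one_smul, sampleMean]
  have hmean : ∫ ξ, (g ξ - m) ∂μ = 0 := by
    rw [integral_sub (hg.integrable one_le_two) (integrable_const m), integral_const]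
    simp [m]
  simp_rw [hcenter, norm_smul, mul_pow, norm_inv, Real.norm_natCast]
  rw [integral_const_mul,
    integral_norm_sum_comp_eval_sq (Y := fun ξ => g ξ - m) (hg.sub (memLp_const m)) hmean]
  field_simp

lemma integral_norm_integral_sub_sampleMean_sq_le [CompleteSpace E] [Nonempty ι] {g : Ξ → E}
    {C : ℝ} (hg : AEStronglyMeasurable g μ) (hC : ∀ ξ, ‖g ξ‖ ≤ C) :
    ∫ I, ‖∫ ξ, g ξ ∂μ - sampleMean ι g I‖ ^ 2 ∂Measure.pi (fun _ : ι => μ) ≤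
      4 * C ^ 2 / Fintype.card ι := by
  have hdev : ∀ ξ, ‖g ξ - ∫ ξ', g ξ' ∂μ‖ ^ 2 ≤ 4 * C ^ 2 := fun ξ => by
    have hmean : ‖∫ ξ', g ξ' ∂μ‖ ≤ C := by
      simpa using norm_integral_le_of_norm_le_const (μ := μ) (ae_of_all _ hC)
    calc ‖g ξ - ∫ ξ', g ξ' ∂μ‖ ^ 2 ≤ (C + C) ^ 2 := by
          gcongr
          exact (norm_sub_le _ _).trans (add_le_add (hC ξ) hmean)
      _ = 4 * C ^ 2 := by ring
  simp_rw [norm_sub_rev (∫ ξ, g ξ ∂μ)]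
  rw [integral_norm_sampleMean_sub_sq (MemLp.of_bound hg C (ae_of_all _ hC)), inv_mul_eq_div]
  gcongr
  exact (integral_mono_of_nonneg (ae_of_all _ fun _ => by positivity) (integrable_const _)
    (ae_of_all _ hdev)).trans_eq (by simp)

end SampleMean

lemma integral_le_integral_of_le_add_inner {α E : Type*} [MeasurableSpace α] {P : Measure α}
    [NormedAddCommGroup E] [InnerProductSpace ℝ E] [CompleteSpace E] {f h : α → ℝ} {Δ : α → E}
    {c : E} (hf : Integrable f P) (hh : Integrable h P) (hΔ : Integrable Δ P)
    (hΔ0 : ∫ x, Δ x ∂P = 0) (hle : ∀ x, f x ≤ h x + ⟪Δ x, c⟫) :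
    ∫ x, f x ∂P ≤ ∫ x, h x ∂P := by
  have hinner : ∫ x, ⟪Δ x, c⟫ ∂P = 0 := by
    simp_rw [real_inner_comm c]
    rw [integral_inner hΔ, hΔ0, inner_zero_right]
  calc ∫ x, f x ∂P ≤ ∫ x, (h x + ⟪Δ x, c⟫) ∂P := integral_mono hf (hh.add (hΔ.inner_const c)) hle
    _ = ∫ x, h x ∂P := by rw [integral_add hh (hΔ.inner_const c), hinner, add_zero]

section InexactGradientStep

variable {E : Type*} [NormedAddCommGroup E] [InnerProductSpace ℝ E]

lemma IsMinOn.inner_add_smul_sub_nonneg {Ω : Set E} (hΩ : Convex ℝ Ω) {g c p u : E} {γ : ℝ}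
    (hmin : IsMinOn (fun u => ⟪g, u⟫ + γ / 2 * ‖u - c‖ ^ 2) Ω p) (hp : p ∈ Ω) (hu : u ∈ Ω) :
    0 ≤ ⟪g + γ • (p - c), u - p⟫ := by
  have hderiv := ((innerSL ℝ g).hasFDerivAt (x := p)).add
      (((hasStrictFDerivAt_id p).sub_const c).hasFDerivAt.norm_sq.const_mul (γ / 2))
  have := hmin.localize.hasFDerivWithinAt_nonneg hderiv.hasFDerivWithinAt
    (sub_mem_posTangentConeAt_of_segment_subset (hΩ.segment_subset hp hu))
  simp only [id_eq, ContinuousLinearMap.comp_id, add_apply,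
    coe_innerSL_apply, smul_apply, nsmul_eq_mul, Nat.cast_ofNat,
    smul_eq_mul] at this
  rw [inner_add_left, real_inner_smul_left]
  linarith

lemma real_inner_le_young {a d : E} {ε : ℝ} (hε : 0 < ε) :
    ⟪a, d⟫ ≤ 1 / (2 * ε) * ‖a‖ ^ 2 + ε / 2 * ‖d‖ ^ 2 := by
  have hsq : 0 ≤ (‖a‖ - ε * ‖d‖) ^ 2 / (2 * ε) := by positivity
  have hexp : (‖a‖ - ε * ‖d‖) ^ 2 / (2 * ε) =
      1 / (2 * ε) * ‖a‖ ^ 2 + ε / 2 * ‖d‖ ^ 2 - ‖a‖ * ‖d‖ := by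
    field_simp
    ring
  linarith [real_inner_le_norm a d]

lemma sub_le_of_inexact_gradient_step {φ : E → ℝ} {G g w₀ w₁ w : E} {lam β γ : ℝ}
    (hγ : β < γ)
    (hsc : ⟪G, w - w₀⟫ + lam / 2 * ‖w - w₀‖ ^ 2 ≤ φ w - φ w₀)
    (hsm : φ w₁ ≤ φ w₀ + ⟪G, w₁ - w₀⟫ + β / 2 * ‖w₁ - w₀‖ ^ 2)
    (hvi : 0 ≤ ⟪g + γ • (w₁ - w₀), w - w₁⟫) :
    φ w₁ - φ w ≤ (γ - lam) / 2 * ‖w - w₀‖ ^ 2 - γ / 2 * ‖w - w₁‖ ^ 2 +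
      1 / (2 * (γ - β)) * ‖G - g‖ ^ 2 + ⟪G - g, w₀ - w⟫ := by
  set d := w₁ - w₀
  set v := w - w₁
  have hw : w - w₀ = d + v := by simp [d, v]
  have hw' : w₀ - w = -(d + v) := by simp [d, v]
  have hyoung := real_inner_le_young (a := G - g) (d := d) (sub_pos.2 hγ)
  rw [hw, norm_add_sq_real, inner_add_right] at hsc
  rw [inner_add_left, real_inner_smul_left] at hvi
  rw [hw, norm_add_sq_real, hw', inner_neg_right, inner_add_right, inner_sub_left G g d,
    inner_sub_left G g v]
  rw [inner_sub_left G g d] at hyoung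
  linear_combination hsc + hsm + hvi + hyoung

end InexactGradientStep

theorem stmt_15_general {E : Type*} [NormedAddCommGroup E] [InnerProductSpace ℝ E] [CompleteSpace E]
    {Ω : Set E} (hconv : Convex ℝ Ω)
    {Ξ : Type*} [MeasurableSpace Ξ] (μ : Measure Ξ) [IsProbabilityMeasure μ]
    {lam L β : ℝ}
    (gl : Ξ → E → E)
    (hglb : ∀ ξ, ∀ u ∈ Ω, ‖gl ξ u‖ ≤ L)
    (φ : E → ℝ)
    (gφ : E → E)
    (hgφeq : ∀ u ∈ Ω, gφ u = ∫ ξ, gl ξ u ∂μ)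
    (hscφ : ∀ u ∈ Ω, ∀ v ∈ Ω, φ u - φ v ≥ ⟪gφ v, u - v⟫ + lam / 2 * ‖u - v‖ ^ 2)
    (hsmoothφ : ∀ u ∈ Ω, ∀ v ∈ Ω, φ u ≤ φ v + ⟪gφ v, u - v⟫ + β / 2 * ‖u - v‖ ^ 2)
    {wstar : E} (hwstar : wstar ∈ Ω)
    {wprev : E} (hwprev : wprev ∈ Ω) {γ : ℝ} (hγ : β < γ)
    {b : ℕ} (hb : 1 ≤ b)
    (P : Measure (Fin b → Ξ)) (hP : P = Measure.pi fun _ : Fin b => μ)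
    (wplus : (Fin b → Ξ) → E) (hmem : ∀ I, wplus I ∈ Ω)
    (hmin : ∀ I, IsMinOn
      (fun u => ⟪(1 / (b : ℝ)) • ∑ j, gl (I j) wprev, u⟫ + γ / 2 * ‖u - wprev‖ ^ 2)
      Ω (wplus I))
    (hglmeas : AEStronglyMeasurable (fun ξ => gl ξ wprev) μ)
    (hint1 : Integrable (fun I => φ (wplus I)) P)
    (hint2 : Integrable (fun I => ‖wstar - wplus I‖ ^ 2) P) :
    ∫ I, (φ (wplus I) - φ wstar) ∂P ≤
      2 * L ^ 2 / ((γ - β) * b) + (γ - lam) / 2 * ‖wstar - wprev‖ ^ 2 -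
        γ / 2 * ∫ I, ‖wstar - wplus I‖ ^ 2 ∂P := by
  subst hP
  have : Nonempty (Fin b) := ⟨⟨0, hb⟩⟩
  set g : Ξ → E := fun ξ => gl ξ wprev
  have hg : MemLp g 2 μ := MemLp.of_bound hglmeas L (ae_of_all _ fun ξ => hglb ξ wprev hwprev)
  have hG : gφ wprev = ∫ ξ, g ξ ∂μ := hgφeq wprev hwprev
  set Δ := fun I => ∫ ξ, g ξ ∂μ - sampleMean (Fin b) g I
  have hpointwise : ∀ I, φ (wplus I) - φ wstar ≤ (γ - lam) / 2 * ‖wstar - wprev‖ ^ 2 -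
      γ / 2 * ‖wstar - wplus I‖ ^ 2 + 1 / (2 * (γ - β)) * ‖Δ I‖ ^ 2 + ⟪Δ I, wprev - wstar⟫ :=
    fun I => by
      have hvi := (hmin I).inner_add_smul_sub_nonneg hconv (hmem I) hwstar
      have hbatch : (1 / (b : ℝ)) • ∑ j, gl (I j) wprev = sampleMean (Fin b) g I := by
        simp [sampleMean, g]
      rw [hbatch] at hvi
      simpa only [Δ, hG] using sub_le_of_inexact_gradient_step hγ
        (hscφ wstar hwstar wprev hwprev) (hsmoothφ (wplus I) (hmem I) wprev hwprev) hvi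
  have hΔ : MemLp Δ 2 (Measure.pi fun _ : Fin b => μ) := (memLp_const _).sub (memLp_sampleMean hg)
  have hΔ0 : ∫ I, Δ I ∂Measure.pi (fun _ : Fin b => μ) = 0 :=
    integral_integral_sub_sampleMean (hg.integrable one_le_two)
  have hΔ_sq : ∫ I, ‖Δ I‖ ^ 2 ∂Measure.pi (fun _ : Fin b => μ) ≤ 4 * L ^ 2 / b := by
    simpa using integral_norm_integral_sub_sampleMean_sq_le (ι := Fin b) hglmeas
      fun ξ => hglb ξ wprev hwprev
  have hint_dist : Integrable (fun I => (γ - lam) / 2 * ‖wstar - wprev‖ ^ 2 -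
      γ / 2 * ‖wstar - wplus I‖ ^ 2) (Measure.pi fun _ => μ) :=
    (integrable_const _).sub (hint2.const_mul _)
  have hint_sq : Integrable (fun I => 1 / (2 * (γ - β)) * ‖Δ I‖ ^ 2) (Measure.pi fun _ => μ) :=
    ((memLp_two_iff_integrable_sq_norm hΔ.1).1 hΔ).const_mul _
  calc ∫ I, (φ (wplus I) - φ wstar) ∂Measure.pi (fun _ => μ)
      ≤ ∫ I, ((γ - lam) / 2 * ‖wstar - wprev‖ ^ 2 - γ / 2 * ‖wstar - wplus I‖ ^ 2 +
          1 / (2 * (γ - β)) * ‖Δ I‖ ^ 2) ∂Measure.pi (fun _ => μ) :=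
        integral_le_integral_of_le_add_inner (hint1.sub (integrable_const _))
          (hint_dist.add hint_sq) (hΔ.integrable one_le_two) hΔ0 hpointwise
    _ = (γ - lam) / 2 * ‖wstar - wprev‖ ^ 2 -
          γ / 2 * ∫ I, ‖wstar - wplus I‖ ^ 2 ∂Measure.pi (fun _ => μ) +
          1 / (2 * (γ - β)) * ∫ I, ‖Δ I‖ ^ 2 ∂Measure.pi (fun _ => μ) := by
        rw [integral_add hint_dist hint_sq, integral_sub (integrable_const _) (hint2.const_mul _),
          integral_const_mul (γ / 2), integral_const_mul (1 / (2 * (γ - β))), integral_const]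
        simp
    _ ≤ _ := by
        have hκ : 0 < γ - β := sub_pos.2 hγ
        have hconst : 1 / (2 * (γ - β)) * (4 * L ^ 2 / b) = 2 * L ^ 2 / ((γ - β) * b) := by
          field_simp
          ring
        have hnoise := mul_le_mul_of_nonneg_left hΔ_sq (by positivity : 0 ≤ 1 / (2 * (γ - β)))
        linarith

/-- One minibatch SGD step: with each `ℓ(ξ,·)` convex, `λ`-strongly convex,
`L`-Lipschitz, differentiable and `β`-smooth, `γ > β`, and `w₊` the minimizer over `Ω` of
`w ↦ ⟨∇φ_I(w_prev), w⟩ + (γ/2)‖w - w_prev‖²` for a minibatch `I ∼ μ^⊗b`,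
`E_I[φ(w₊) - φ(w*)] ≤ 2L²/((γ-β)b) + ((γ-λ)/2)‖w* - w_prev‖² - (γ/2)E_I‖w* - w₊‖²`. -/
theorem stmt_15 {E : Type*} [NormedAddCommGroup E] [InnerProductSpace ℝ E] [CompleteSpace E]
    {Ω : Set E} (hne : Ω.Nonempty) (hcl : IsClosed Ω) (hconv : Convex ℝ Ω)
    {Ξ : Type*} [MeasurableSpace Ξ] (μ : Measure Ξ) [IsProbabilityMeasure μ]
    (l : Ξ → E → ℝ) {lam L β : ℝ} (hlam : 0 ≤ lam) (hL : 0 < L)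
    (hconvl : ∀ ξ, ConvexOn ℝ Ω (l ξ))
    (hscl : ∀ ξ, StrongConvexOn Ω lam (l ξ))
    (hlip : ∀ ξ, ∀ u ∈ Ω, ∀ u' ∈ Ω, |l ξ u - l ξ u'| ≤ L * ‖u - u'‖)
    (gl : Ξ → E → E)
    (hgl : ∀ ξ u, HasGradientAt (l ξ) (gl ξ u) u)
    (hglb : ∀ ξ, ∀ u ∈ Ω, ‖gl ξ u‖ ≤ L)
    (hsmoothl : ∀ ξ, ∀ u ∈ Ω, ∀ v ∈ Ω,
      l ξ u ≤ l ξ v + ⟪gl ξ v, u - v⟫ + β / 2 * ‖u - v‖ ^ 2)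
    (φ : E → ℝ) (hφ : ∀ u, φ u = ∫ ξ, l ξ u ∂μ)
    (hφint : ∀ u ∈ Ω, Integrable (fun ξ => l ξ u) μ)
    (gφ : E → E) (hgφ : ∀ u, HasGradientAt φ (gφ u) u)
    (hgφeq : ∀ u ∈ Ω, gφ u = ∫ ξ, gl ξ u ∂μ)
    (hgφb : ∀ u ∈ Ω, ‖gφ u‖ ≤ L)
    (hscφ : ∀ u ∈ Ω, ∀ v ∈ Ω, φ u - φ v ≥ ⟪gφ v, u - v⟫ + lam / 2 * ‖u - v‖ ^ 2)
    (hsmoothφ : ∀ u ∈ Ω, ∀ v ∈ Ω, φ u ≤ φ v + ⟪gφ v, u - v⟫ + β / 2 * ‖u - v‖ ^ 2)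
    {wstar : E} (hwstar : wstar ∈ Ω) (hwstarmin : IsMinOn φ Ω wstar)
    {wprev : E} (hwprev : wprev ∈ Ω) {γ : ℝ} (hγ : β < γ)
    {b : ℕ} (hb : 1 ≤ b)
    (P : Measure (Fin b → Ξ)) (hP : P = Measure.pi fun _ : Fin b => μ)
    (wplus : (Fin b → Ξ) → E) (hmem : ∀ I, wplus I ∈ Ω)
    (hmin : ∀ I, IsMinOn
      (fun u => ⟪(1 / (b : ℝ)) • ∑ j, gl (I j) wprev, u⟫ + γ / 2 * ‖u - wprev‖ ^ 2)
      Ω (wplus I))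
    (hmeas : AEStronglyMeasurable wplus P)
    (hglmeas : AEStronglyMeasurable (fun ξ => gl ξ wprev) μ)
    (hint1 : Integrable (fun I => φ (wplus I)) P)
    (hint2 : Integrable (fun I => ‖wstar - wplus I‖ ^ 2) P) :
    ∫ I, (φ (wplus I) - φ wstar) ∂P ≤
      2 * L ^ 2 / ((γ - β) * b) + (γ - lam) / 2 * ‖wstar - wprev‖ ^ 2 -
        γ / 2 * ∫ I, ‖wstar - wplus I‖ ^ 2 ∂P :=
  stmt_15_general hconv μ gl hglb φ gφ hgφeq hscφ hsmoothφ hwstar hwprev hγ hb P hP wplus hmem hmin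
    hglmeas hint1 hint2
end

section
/- Let E be a real inner product space, Ω ⊆ E a nonempty closed convex set, g : E → ℝ convex and L-Lipschitz on Ω, γ > 0, and w_0 ∈ Ω. Let f(w) = g(w) + (γ/2)‖w − w_0‖² and let w* be the unique minimizer of f over Ω. Then ‖w* − w_0‖ ≤ L/γ and f(w_0) − f(w*) ≤ L²/γ. -/
/-- Warm-start suboptimality of a proximal subproblem: for `g` convex and
`L`-Lipschitz on `Ω`, `γ > 0`, `w₀ ∈ Ω`, `f(w) = g(w) + (γ/2)‖w - w₀‖²` and `w*` the
minimizer of `f` over `Ω`, one has `‖w* - w₀‖ ≤ L/γ` and `f(w₀) - f(w*) ≤ L²/γ`. -/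
theorem stmt_17 {E : Type*} [NormedAddCommGroup E] [InnerProductSpace ℝ E]
    {Ω : Set E} (hne : Ω.Nonempty) (hcl : IsClosed Ω) (hconv : Convex ℝ Ω)
    {g : E → ℝ} (hg : ConvexOn ℝ Ω g) {L : ℝ} (hL : 0 < L)
    (hlip : ∀ w ∈ Ω, ∀ w' ∈ Ω, |g w - g w'| ≤ L * ‖w - w'‖)
    {γ : ℝ} (hγ : 0 < γ) {w0 : E} (hw0 : w0 ∈ Ω)
    {wstar : E} (hmem : wstar ∈ Ω)
    (hmin : IsMinOn (fun w => g w + γ / 2 * ‖w - w0‖ ^ 2) Ω wstar) :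
    ‖wstar - w0‖ ≤ L / γ ∧
      (g w0 + γ / 2 * ‖w0 - w0‖ ^ 2) - (g wstar + γ / 2 * ‖wstar - w0‖ ^ 2) ≤ L ^ 2 / γ := by
  set d : ℝ := ‖wstar - w0‖ with hd
  have hd0 : 0 ≤ d := norm_nonneg _
  -- Step 1: for each t ∈ (0,1], the convex combination gives a strong-convexity-like bound.
  have h1 : ∀ t : ℝ, 0 < t → t ≤ 1 → γ * d ^ 2 - γ / 2 * d ^ 2 * t ≤ g w0 - g wstar := by
    intro t ht0 ht1
    have h1t : (0:ℝ) ≤ 1 - t := by linarith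
    have hsum : (1 - t) + t = 1 := by ring
    have hptΩ : (1 - t) • wstar + t • w0 ∈ Ω := hconv hmem hw0 h1t ht0.le hsum
    have hgpt : g ((1 - t) • wstar + t • w0) ≤ (1 - t) * g wstar + t * g w0 :=
      hg.2 hmem hw0 h1t ht0.le hsum
    have hnorm : ‖(1 - t) • wstar + t • w0 - w0‖ = (1 - t) * d := by
      have : (1 - t) • wstar + t • w0 - w0 = (1 - t) • (wstar - w0) := by
        module
      rw [this, norm_smul, Real.norm_eq_abs, abs_of_nonneg h1t]
    have hm : g wstar + γ / 2 * d ^ 2 ≤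
        g ((1 - t) • wstar + t • w0) + γ / 2 * ((1 - t) * d) ^ 2 := by
      have := hmin hptΩ
      simp only [Set.mem_setOf_eq, hnorm, ← hd] at this
      exact this
    nlinarith [hm, hgpt, mul_pos ht0 ht0, sq_nonneg d, sq_nonneg t,
      mul_nonneg (mul_nonneg hγ.le (sq_nonneg d)) ht0.le]
  -- Step 2: γ d² ≤ g w0 - g wstar
  have h2 : γ * d ^ 2 ≤ g w0 - g wstar := by
    apply le_of_forall_pos_le_add
    intro ε hε
    set t : ℝ := min 1 (ε / (γ / 2 * d ^ 2 + ε)) with htdef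
    have hden : 0 < γ / 2 * d ^ 2 + ε := by positivity
    have ht0 : 0 < t := lt_min one_pos (div_pos hε hden)
    have ht1 : t ≤ 1 := min_le_left _ _
    have hts : γ / 2 * d ^ 2 * t ≤ ε := by
      have h1 : γ / 2 * d ^ 2 * t ≤ γ / 2 * d ^ 2 * (ε / (γ / 2 * d ^ 2 + ε)) := by
        apply mul_le_mul_of_nonneg_left (min_le_right _ _) (by positivity)
      have h2 : γ / 2 * d ^ 2 * (ε / (γ / 2 * d ^ 2 + ε)) ≤ ε := by
        rw [mul_div_assoc'] at *
        rw [div_le_iff₀ hden]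
        nlinarith [sq_nonneg d]
      linarith
    have := h1 t ht0 ht1
    linarith
  -- g w0 - g wstar ≤ L * d by Lipschitz
  have h3 : g w0 - g wstar ≤ L * d := by
    have := hlip w0 hw0 wstar hmem
    have hn : ‖w0 - wstar‖ = d := by rw [hd, norm_sub_rev]
    rw [hn] at this
    exact (abs_le.mp this).2
  -- d ≤ L / γ
  have h4 : d ≤ L / γ := by
    rcases eq_or_lt_of_le hd0 with h | h
    · rw [← h]; positivity
    · rw [le_div_iff₀ hγ]
      nlinarith
  refine ⟨h4, ?_⟩
  have h5 : γ / 2 * d ^ 2 ≥ 0 := by positivity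
  have h6 : L * d ≤ L ^ 2 / γ := by
    calc L * d ≤ L * (L / γ) := by nlinarith
    _ = L ^ 2 / γ := by ring
  simp only [sub_self, norm_zero]
  nlinarith
end
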